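/- Under the same hypotheses (S symmetric solving S = A_F S A_F' + C_F S C_F' + [I;F] Z [I;F]'), the full matrix S satisfies S = [I;F] S₁₁ [I;F]', where S₁₁ is its upper-left n×n block. -/

import Mathlib

/-! Writing `A_F = [I;F] [A B]` and `C_F = [I;F] [C D]`, the equation says `S = [I;F] M [I;F]ᵀ`
for `M = [A B] S [A B]ᵀ + [C D] S [C D]ᵀ + Z`. The upper-left block of `[I;F] M [I;F]ᵀ` is `M`
itself, so `M = S₁₁`. -/

open Matrix

section

variable {n m R : Type*} [Fintype n] [DecidableEq n] [Semiring R]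

lemma fromBlocks_mul_left_eq_fromRows_one_mul_fromCols {k : Type*}
    (F : Matrix m n R) (A : Matrix n n R) (B : Matrix n k R) :
    fromBlocks A B (F * A) (F * B) = fromRows 1 F * fromCols A B := by
  rw [fromRows_mul_fromCols, Matrix.one_mul, Matrix.one_mul]

lemma toBlocks₁₁_fromRows_one_mul_mul_transpose
    (F : Matrix m n R) (M : Matrix n n R) :
    (fromRows 1 F * M * (fromRows 1 F)ᵀ).toBlocks₁₁ = M := by
  rw [transpose_fromRows, fromRows_mul, fromRows_mul_fromCols, toBlocks_fromBlocks₁₁,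
    Matrix.one_mul, transpose_one, Matrix.mul_one]

lemma eq_fromRows_one_mul_toBlocks₁₁_mul_transpose
    {F : Matrix m n R} {M : Matrix n n R} {S : Matrix (n ⊕ m) (n ⊕ m) R}
    (hS : S = fromRows 1 F * M * (fromRows 1 F)ᵀ) :
    S = fromRows 1 F * S.toBlocks₁₁ * (fromRows 1 F)ᵀ := by
  conv_rhs => rw [hS, toBlocks₁₁_fromRows_one_mul_mul_transpose]
  exact hS

end

theorem stmt_2_general {n m : ℕ}
    (A C : Matrix (Fin n) (Fin n) ℝ) (B D : Matrix (Fin n) (Fin m) ℝ)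
    (F : Matrix (Fin m) (Fin n) ℝ) (Z : Matrix (Fin n) (Fin n) ℝ)
    (S : Matrix (Fin n ⊕ Fin m) (Fin n ⊕ Fin m) ℝ)
    (hEq : S = (fromBlocks A B (F * A) (F * B)) * S * (fromBlocks A B (F * A) (F * B))ᵀ
        + (fromBlocks C D (F * C) (F * D)) * S * (fromBlocks C D (F * C) (F * D))ᵀ
        + (fromRows 1 F) * Z * (fromRows 1 F)ᵀ) :
    S = (fromRows 1 F) * S.toBlocks₁₁ * (fromRows 1 F)ᵀ := by
  apply eq_fromRows_one_mul_toBlocks₁₁_mul_transpose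
    (M := fromCols A B * S * (fromCols A B)ᵀ + fromCols C D * S * (fromCols C D)ᵀ + Z)
  refine hEq.trans ?_
  rw [fromBlocks_mul_left_eq_fromRows_one_mul_fromCols,
    fromBlocks_mul_left_eq_fromRows_one_mul_fromCols]
  simp only [transpose_mul, Matrix.mul_add, Matrix.add_mul, Matrix.mul_assoc]

theorem stmt_2 {n m : ℕ}
    (A C : Matrix (Fin n) (Fin n) ℝ) (B D : Matrix (Fin n) (Fin m) ℝ)
    (F : Matrix (Fin m) (Fin n) ℝ) (Z : Matrix (Fin n) (Fin n) ℝ)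
    (hZ : Zᵀ = Z)
    (S : Matrix (Fin n ⊕ Fin m) (Fin n ⊕ Fin m) ℝ) (hSsym : Sᵀ = S)
    (hEq : S = (fromBlocks A B (F * A) (F * B)) * S * (fromBlocks A B (F * A) (F * B))ᵀ
        + (fromBlocks C D (F * C) (F * D)) * S * (fromBlocks C D (F * C) (F * D))ᵀ
        + (fromRows 1 F) * Z * (fromRows 1 F)ᵀ) :
    S = (fromRows 1 F) * S.toBlocks₁₁ * (fromRows 1 F)ᵀ :=
  stmt_2_general A C B D F Z S hEq
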